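/- Let C be a compact convex subset of ℝ² with positive area, let P be a point, and let A(θ) = area(C ∩ H(P,θ)) with H(P,θ) = {x : ⟨x − P, (−sin θ, cos θ)⟩ ≥ 0}. Suppose α < β with β − α < π, A(α) = 0 and A(β) = area(C), and let n ≥ 2 be an integer. Then there exists a unique strictly increasing tuple (θ₁, …, θ_{n−1}) of angles in the open interval (α, β) such that A(θ_k) = (k/n) · area(C) for every k = 1, …, n−1. In other words, a point P exterior to C admits exactly one fan of n−1 rays partitioning C into n pieces of equal area. -/

import Mathlib

/-
Up to the null set `C \ H(P,β)`, the sets `C ∩ H(P,θ)` increase with `θ ∈ [α, β]`, because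
`H(P,θ₁) ∩ H(P,β) ⊆ H(P,θ₂)` whenever `θ₁ ≤ θ₂ ≤ β < θ₁ + π`; and `A` is continuous since each
boundary line is null. If `A θ₁ = A θ₂` with `θ₁ < θ₂` and `0 < A θ₁`, `A θ₂ < area C`, then
the convex set `interior C ∩ H(P,β)`, which misses `P`, meets both `H(P,θ₁)` and the complement
of `H(P,θ₂)`; by connectedness it meets the line of angle `θ₁` at a point `z ≠ P`, which therefore
lies strictly inside `H(P,θ₂)`, and an open neighbourhood of `z` in `interior C` then contains
points of `H(P,θ₂) \ H(P,θ₁)`: a piece of positive area, a contradiction. So `A` is strictly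
increasing between the levels `0` and `area C`, and the intermediate value theorem gives exactly
one angle for each level `(k + 1)/n · area C`.
-/

open MeasureTheory Set Filter Topology Real
open scoped RealInnerProductSpace ENNReal

local notation "ℝ²" => EuclideanSpace ℝ (Fin 2)

lemma exists_inner_sub_neg_of_isOpen {E : Type*} [NormedAddCommGroup E] [InnerProductSpace ℝ E]
    {V : Set E} (hV : IsOpen V) {z v : E} (hz : z ∈ V) (hv : v ≠ 0) :
    ∃ w ∈ V, ⟪w - z, v⟫ < 0 := by
  have hlim : Tendsto (fun ε : ℝ => z - ε • v) (𝓝[>] 0) (𝓝 z) :=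
    ((continuous_const.sub (continuous_id.smul continuous_const)).tendsto' 0 z
      (by simp)).mono_left nhdsWithin_le_nhds
  obtain ⟨ε, hεV, hε⟩ := ((hlim.eventually (hV.mem_nhds hz)).and self_mem_nhdsWithin).exists
  refine ⟨_, hεV, ?_⟩
  rw [sub_sub_cancel_left, inner_neg_left, inner_smul_left, real_inner_self_eq_norm_sq]
  have hv' : 0 < ‖v‖ := norm_pos_iff.mpr hv
  have hε' : (0 : ℝ) < ε := hε
  simp only [conj_trivial, Left.neg_neg_iff]
  positivity

lemma measure_setOf_inner_sub_eq_zero {E : Type*} [NormedAddCommGroup E] [InnerProductSpace ℝ E]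
    [FiniteDimensional ℝ E] [MeasurableSpace E] [BorelSpace E] (μ : Measure E)
    [μ.IsAddHaarMeasure] (Q : E) {v : E} (hv : v ≠ 0) : μ {x | ⟪x - Q, v⟫ = 0} = 0 := by
  have hline : {x | ⟪x - Q, v⟫ = 0} = (· + -Q) ⁻¹' (LinearMap.ker (innerₛₗ ℝ v)) := by
    ext x
    simp [real_inner_comm, sub_eq_add_neg]
  rw [hline, measure_preimage_add_right]
  refine Measure.addHaar_submodule μ _ fun htop => hv ?_
  have hvv : v ∈ LinearMap.ker (innerₛₗ ℝ v) := htop ▸ Submodule.mem_top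
  simpa using hvv

lemma nonempty_inter_of_measure_diff_eq_zero {X : Type*} [MeasurableSpace X] {μ : Measure X}
    {C G S : Set X} (hG : μ (C \ G) = 0) (hS : μ (C ∩ S) ≠ 0) : (G ∩ S).Nonempty :=
  nonempty_of_measure_ne_zero fun h => hS <| measure_mono_null
    (fun x ⟨hxC, hxS⟩ => (em (x ∈ G)).imp (fun hxG => ⟨hxG, hxS⟩) fun hxG => ⟨hxC, hxG⟩)
    (measure_union_null h hG)

noncomputable def lineNormal (θ : ℝ) : ℝ² := !₂[-sin θ, cos θ]

lemma inner_lineNormal (v : ℝ²) (θ : ℝ) : ⟪v, lineNormal θ⟫ = -v 0 * sin θ + v 1 * cos θ := by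
  simp [lineNormal, PiLp.inner_apply, Fin.sum_univ_two]
  ring

lemma lineNormal_ne_zero (θ : ℝ) : lineNormal θ ≠ 0 := by
  intro h
  have hs := congrArg (· 0) h
  have hc := congrArg (· 1) h
  simp [lineNormal] at hs hc
  simpa [hs, hc] using sin_sq_add_cos_sq θ

lemma continuous_inner_lineNormal (v : ℝ²) : Continuous fun θ => ⟪v, lineNormal θ⟫ := by
  simp only [inner_lineNormal]; fun_prop

lemma sin_sub_smul_lineNormal (θ₁ θ₂ θ₃ : ℝ) :
    sin (θ₃ - θ₁) • lineNormal θ₂ =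
      sin (θ₃ - θ₂) • lineNormal θ₁ + sin (θ₂ - θ₁) • lineNormal θ₃ := by
  ext i
  fin_cases i <;> simp [lineNormal, sin_sub] <;> ring

lemma inner_lineNormal_nonneg_of_mem_Icc {v : ℝ²} {θ₁ θ₂ θ₃ : ℝ} (h₁₂ : θ₁ ≤ θ₂) (h₂₃ : θ₂ ≤ θ₃)
    (hπ : θ₃ - θ₁ < π) (h₁ : 0 ≤ ⟪v, lineNormal θ₁⟫) (h₃ : 0 ≤ ⟪v, lineNormal θ₃⟫) :
    0 ≤ ⟪v, lineNormal θ₂⟫ := by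
  rcases h₁₂.eq_or_lt with rfl | h₁₂
  · exact h₁
  have key := congrArg (⟪v, ·⟫) (sin_sub_smul_lineNormal θ₁ θ₂ θ₃)
  simp only [inner_add_right, inner_smul_right] at key
  have hs₁₃ : 0 < sin (θ₃ - θ₁) := sin_pos_of_pos_of_lt_pi (by linarith) hπ
  have hs₂₃ : 0 ≤ sin (θ₃ - θ₂) := sin_nonneg_of_nonneg_of_le_pi (by linarith) (by linarith)
  have hs₁₂ : 0 ≤ sin (θ₂ - θ₁) := sin_nonneg_of_nonneg_of_le_pi (by linarith) (by linarith)
  refine nonneg_of_mul_nonneg_right ?_ hs₁₃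
  rw [key]
  positivity

lemma eq_zero_of_inner_lineNormal_eq_zero {v : ℝ²} {θ₁ θ₂ : ℝ} (h₁₂ : θ₁ < θ₂) (hπ : θ₂ - θ₁ < π)
    (h₁ : ⟪v, lineNormal θ₁⟫ = 0) (h₂ : ⟪v, lineNormal θ₂⟫ = 0) : v = 0 := by
  rw [inner_lineNormal] at h₁ h₂
  have hs : sin (θ₂ - θ₁) ≠ 0 := (sin_pos_of_pos_of_lt_pi (by linarith) hπ).ne'
  ext i
  fin_cases i
  · refine (mul_eq_zero.mp (?_ : v 0 * sin (θ₂ - θ₁) = 0)).resolve_right hs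
    rw [sin_sub]; linear_combination cos θ₂ * h₁ - cos θ₁ * h₂
  · refine (mul_eq_zero.mp (?_ : v 1 * sin (θ₂ - θ₁) = 0)).resolve_right hs
    rw [sin_sub]; linear_combination sin θ₂ * h₁ - sin θ₁ * h₂

def halfPlane (P : ℝ²) (θ : ℝ) : Set ℝ² := {x | 0 ≤ ⟪x - P, lineNormal θ⟫}

lemma mem_halfPlane {P x : ℝ²} {θ : ℝ} : x ∈ halfPlane P θ ↔ 0 ≤ ⟪x - P, lineNormal θ⟫ :=
  Iff.rfl

lemma isClosed_halfPlane (P : ℝ²) (θ : ℝ) : IsClosed (halfPlane P θ) :=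
  isClosed_le continuous_const ((continuous_id.sub continuous_const).inner continuous_const)

lemma convex_halfPlane (P : ℝ²) (θ : ℝ) : Convex ℝ (halfPlane P θ) := by
  intro x hx y hy a b ha hb hab
  have hxy : a • x + b • y - P = a • (x - P) + b • (y - P) := by
    calc a • x + b • y - P = a • x + b • y - (a + b) • P := by rw [hab, one_smul]
      _ = a • (x - P) + b • (y - P) := by module
  change 0 ≤ ⟪a • x + b • y - P, lineNormal θ⟫
  rw [hxy, inner_add_left, inner_smul_left, inner_smul_left]
  exact add_nonneg (mul_nonneg ha hx) (mul_nonneg hb hy)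

lemma halfPlane_inter_subset {P : ℝ²} {θ₁ θ₂ θ₃ : ℝ} (h₁₂ : θ₁ ≤ θ₂) (h₂₃ : θ₂ ≤ θ₃)
    (hπ : θ₃ - θ₁ < π) : halfPlane P θ₁ ∩ halfPlane P θ₃ ⊆ halfPlane P θ₂ :=
  fun _ hx => inner_lineNormal_nonneg_of_mem_Icc h₁₂ h₂₃ hπ hx.1 hx.2

lemma eventually_mem_halfPlane_iff {P x : ℝ²} {θ₀ : ℝ} (hx : ⟪x - P, lineNormal θ₀⟫ ≠ 0) :
    ∀ᶠ θ in 𝓝 θ₀, x ∈ halfPlane P θ ↔ x ∈ halfPlane P θ₀ := by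
  have hcont := (continuous_inner_lineNormal (x - P)).tendsto θ₀
  rcases hx.lt_or_gt with h | h
  · filter_upwards [hcont.eventually (gt_mem_nhds h)] with θ hθ
    exact iff_of_false hθ.not_ge h.not_ge
  · filter_upwards [hcont.eventually (lt_mem_nhds h)] with θ hθ
    exact iff_of_true hθ.le h.le

lemma exists_mem_wedge {U : Set ℝ²} (hUo : IsOpen U) (hUc : Convex ℝ U) {P : ℝ²} (hP : P ∉ U)
    {θ₁ θ₂ β : ℝ} (h₁₂ : θ₁ < θ₂) (h₂β : θ₂ ≤ β) (hπ : β - θ₁ < π) {x y : ℝ²}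
    (hx : x ∈ U ∩ halfPlane P β ∩ halfPlane P θ₁)
    (hy : y ∈ U ∩ halfPlane P β ∩ (halfPlane P θ₂)ᶜ) :
    ∃ w ∈ U, ⟪w - P, lineNormal θ₁⟫ < 0 ∧ 0 < ⟪w - P, lineNormal θ₂⟫ := by
  have hsub := halfPlane_inter_subset (P := P) h₁₂.le h₂β hπ
  have hy₁ : ⟪y - P, lineNormal θ₁⟫ < 0 := not_le.1 fun h => hy.2 (hsub ⟨h, hy.1.2⟩)
  obtain ⟨z, hzK, hz₁ : ⟪z - P, lineNormal θ₁⟫ = 0⟩ :=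
    (hUc.inter (convex_halfPlane P β)).isPreconnected.intermediate_value hy.1 hx.1
      (f := fun x => ⟪x - P, lineNormal θ₁⟫) (by fun_prop) ⟨hy₁.le, hx.2⟩
  have hz₂ : 0 < ⟪z - P, lineNormal θ₂⟫ := by
    refine (hsub ⟨hz₁.ge, hzK.2⟩).lt_of_ne fun h => hP ?_
    rw [← sub_eq_zero.1 (eq_zero_of_inner_lineNormal_eq_zero h₁₂ (by linarith) hz₁ h.symm)]
    exact hzK.1
  obtain ⟨w, ⟨hwU, hw₂⟩, hw⟩ := exists_inner_sub_neg_of_isOpen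
    (hUo.inter (isOpen_lt continuous_const (by fun_prop) :
      IsOpen {x | 0 < ⟪x - P, lineNormal θ₂⟫})) ⟨hzK.1, hz₂⟩ (lineNormal_ne_zero θ₁)
  refine ⟨w, hwU, ?_, hw₂⟩
  calc ⟪w - P, lineNormal θ₁⟫ = ⟪w - z, lineNormal θ₁⟫ + ⟪z - P, lineNormal θ₁⟫ := by
        rw [← inner_add_left, sub_add_sub_cancel]
    _ < 0 := by rw [hz₁, add_zero]; exact hw

section Measure

variable {μ : Measure ℝ²} {C : Set ℝ²} {P : ℝ²}

lemma continuous_measure_inter_halfPlane [μ.IsAddHaarMeasure] (hC : MeasurableSet C)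
    (hCfin : μ C ≠ ∞) : Continuous fun θ => μ (C ∩ halfPlane P θ) := by
  have hmeas θ : MeasurableSet (C ∩ halfPlane P θ) :=
    hC.inter (isClosed_halfPlane P θ).measurableSet
  refine continuous_iff_continuousAt.2 fun θ₀ => tendsto_measure_of_ae_tendsto_indicator (𝓝 θ₀)
    (hmeas θ₀) hmeas hC hCfin (.of_forall fun _ => inter_subset_left) ?_
  filter_upwards [measure_eq_zero_iff_ae_notMem.1
    (measure_setOf_inner_sub_eq_zero μ P (lineNormal_ne_zero θ₀))] with x hx
  filter_upwards [eventually_mem_halfPlane_iff hx] with θ hθ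
  exact and_congr_right fun _ => hθ

lemma measure_inter_halfPlane_le_inter {θ₁ θ₂ β : ℝ} (hN : μ (C \ halfPlane P β) = 0)
    (h₁₂ : θ₁ ≤ θ₂) (h₂β : θ₂ ≤ β) (hπ : β - θ₁ < π) :
    μ (C ∩ halfPlane P θ₁) ≤ μ (C ∩ halfPlane P θ₂ ∩ halfPlane P θ₁) := by
  refine measure_mono_ae (ae_le_set.2 (measure_mono_null ?_ hN))
  rintro x ⟨⟨hxC, hx₁⟩, hx⟩
  exact ⟨hxC, fun hxβ => hx ⟨⟨hxC, halfPlane_inter_subset h₁₂ h₂β hπ ⟨hx₁, hxβ⟩⟩, hx₁⟩⟩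

lemma measure_inter_halfPlane_mono {θ₁ θ₂ β : ℝ} (hN : μ (C \ halfPlane P β) = 0)
    (h₁₂ : θ₁ ≤ θ₂) (h₂β : θ₂ ≤ β) (hπ : β - θ₁ < π) :
    μ (C ∩ halfPlane P θ₁) ≤ μ (C ∩ halfPlane P θ₂) :=
  (measure_inter_halfPlane_le_inter hN h₁₂ h₂β hπ).trans (measure_mono inter_subset_left)

lemma notMem_interior_of_measure_diff_halfPlane_eq_zero [μ.IsOpenPosMeasure] {β : ℝ}
    (hN : μ (C \ halfPlane P β) = 0) : P ∉ interior C := by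
  intro hP
  obtain ⟨w, hw, hneg⟩ := exists_inner_sub_neg_of_isOpen isOpen_interior hP (lineNormal_ne_zero β)
  have hU : IsOpen (interior C ∩ {x | ⟪x - P, lineNormal β⟫ < 0}) :=
    isOpen_interior.inter (isOpen_lt (by fun_prop) continuous_const)
  refine (hU.measure_pos μ ⟨w, hw, hneg⟩).ne' (measure_mono_null ?_ hN)
  exact fun x hx => ⟨interior_subset hx.1, mem_halfPlane.not.2 hx.2.not_ge⟩

lemma measure_inter_halfPlane_diff_pos [μ.IsAddHaarMeasure] (hCc : Convex ℝ C)
    {θ₁ θ₂ β : ℝ} (hN : μ (C \ halfPlane P β) = 0) (h₁₂ : θ₁ < θ₂) (h₂β : θ₂ ≤ β)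
    (hπ : β - θ₁ < π) (hpos : μ (C ∩ halfPlane P θ₁) ≠ 0) (hlt : μ (C ∩ halfPlane P θ₂) ≠ μ C) :
    0 < μ ((C ∩ halfPlane P θ₂) \ halfPlane P θ₁) := by
  have hG : μ (C \ (interior C ∩ halfPlane P β)) = 0 := by
    refine measure_mono_null (fun x ⟨hxC, hx⟩ => ?_)
      (measure_union_null (hCc.addHaar_frontier μ) hN)
    by_cases hxβ : x ∈ halfPlane P β
    · exact .inl ⟨subset_closure hxC, fun hxi => hx ⟨hxi, hxβ⟩⟩
    · exact .inr ⟨hxC, hxβ⟩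
  obtain ⟨x, hx⟩ := nonempty_inter_of_measure_diff_eq_zero hG hpos
  obtain ⟨y, hy⟩ := nonempty_inter_of_measure_diff_eq_zero hG (S := (halfPlane P θ₂)ᶜ)
    fun h => hlt (measure_inter_conull' h)
  obtain ⟨w, hw, hw₁, hw₂⟩ := exists_mem_wedge isOpen_interior hCc.interior
    (notMem_interior_of_measure_diff_halfPlane_eq_zero hN) h₁₂ h₂β hπ hx hy
  have hW : IsOpen (interior C ∩ {x | ⟪x - P, lineNormal θ₁⟫ < 0} ∩
      {x | 0 < ⟪x - P, lineNormal θ₂⟫}) :=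
    (isOpen_interior.inter (isOpen_lt (by fun_prop) continuous_const)).inter
      (isOpen_lt continuous_const (by fun_prop))
  refine (hW.measure_pos μ ⟨w, ⟨hw, hw₁⟩, hw₂⟩).trans_le (measure_mono ?_)
  exact fun x ⟨⟨hxi, hx₁⟩, hx₂⟩ =>
    ⟨⟨interior_subset hxi, mem_halfPlane.2 hx₂.le⟩, mem_halfPlane.not.2 hx₁.not_ge⟩

lemma measure_inter_halfPlane_lt [μ.IsAddHaarMeasure] (hC : IsCompact C) (hCc : Convex ℝ C)
    {θ₁ θ₂ β : ℝ} (hN : μ (C \ halfPlane P β) = 0) (h₁₂ : θ₁ < θ₂) (h₂β : θ₂ ≤ β)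
    (hπ : β - θ₁ < π) (hpos : μ (C ∩ halfPlane P θ₁) ≠ 0) (hlt : μ (C ∩ halfPlane P θ₂) ≠ μ C) :
    μ (C ∩ halfPlane P θ₁) < μ (C ∩ halfPlane P θ₂) :=
  calc μ (C ∩ halfPlane P θ₁) ≤ μ (C ∩ halfPlane P θ₂ ∩ halfPlane P θ₁) :=
        measure_inter_halfPlane_le_inter hN h₁₂.le h₂β hπ
    _ < μ (C ∩ halfPlane P θ₂ ∩ halfPlane P θ₁) + μ ((C ∩ halfPlane P θ₂) \ halfPlane P θ₁) :=
        ENNReal.lt_add_right (measure_ne_top_of_subset (fun _ hx => hx.1.1) hC.measure_lt_top.ne)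
          (measure_inter_halfPlane_diff_pos hCc hN h₁₂ h₂β hπ hpos hlt).ne'
    _ = μ (C ∩ halfPlane P θ₂) := measure_inter_add_sdiff _ (isClosed_halfPlane P θ₁).measurableSet

end Measure

lemma existsUnique_strictMono_comp_eq {γ : Type*} [LinearOrder γ] [TopologicalSpace γ]
    [OrderClosedTopology γ] {f : ℝ → γ} {a b : ℝ} (hab : a ≤ b) (hf : ContinuousOn f (Icc a b))
    (hmono : MonotoneOn f (Icc a b)) (hstrict : StrictMonoOn f (Icc a b ∩ f ⁻¹' Ioo (f a) (f b)))
    {m : ℕ} {c : Fin m → γ} (hc : StrictMono c) (hcab : ∀ k, c k ∈ Ioo (f a) (f b)) :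
    ∃! θ : Fin m → ℝ, StrictMono θ ∧ (∀ k, θ k ∈ Ioo a b) ∧ ∀ k, f (θ k) = c k := by
  choose θ hθ hfθ using fun k => intermediate_value_Ioo hab hf (hcab k)
  refine ⟨θ, ⟨fun k l hkl => ?_, hθ, hfθ⟩, fun χ ⟨_, hχ, hfχ⟩ => funext fun k => ?_⟩
  · exact hmono.reflect_lt (Ioo_subset_Icc_self (hθ k)) (Ioo_subset_Icc_self (hθ l))
      (by rw [hfθ, hfθ]; exact hc hkl)
  · refine hstrict.injOn ⟨Ioo_subset_Icc_self (hχ k), ?_⟩ ⟨Ioo_subset_Icc_self (hθ k), ?_⟩ ?_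
    · rw [mem_preimage, hfχ]; exact hcab k
    · rw [mem_preimage, hfθ]; exact hcab k
    · rw [hfχ, hfθ]

lemma ENNReal.natCast_succ_div_mul_mem_Ioo {V : ℝ≥0∞} (h0 : V ≠ 0) (hV : V ≠ ∞) {n : ℕ}
    (k : Fin (n - 1)) : ((k : ℕ) + 1 : ℝ≥0∞) / n * V ∈ Ioo 0 V := by
  have hkn : (k : ℕ) + 1 < n := by omega
  refine ⟨ENNReal.mul_pos (ENNReal.div_pos (by simp) (by simp)).ne' h0, ?_⟩
  have hlt : ((k : ℕ) + 1 : ℝ≥0∞) / n < 1 := by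
    rw [ENNReal.div_lt_iff (by simp) (by simp), one_mul]
    exact_mod_cast hkn
  simpa using ENNReal.mul_lt_mul_left h0 hV hlt

lemma ENNReal.strictMono_natCast_succ_div_mul {V : ℝ≥0∞} (h0 : V ≠ 0) (hV : V ≠ ∞) (n : ℕ) :
    StrictMono fun k : Fin (n - 1) => ((k : ℕ) + 1 : ℝ≥0∞) / n * V := by
  intro k l hkl
  have hn : (n : ℝ≥0∞) ≠ 0 := by simp; omega
  refine ENNReal.mul_lt_mul_left h0 hV (ENNReal.div_lt_div_right hn (by simp) ?_)
  exact_mod_cast Nat.succ_lt_succ hkl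

theorem existsUnique_equipartitioning_fan_of_sweep_general
    (C : Set (EuclideanSpace ℝ (Fin 2))) (hCcompact : IsCompact C) (hCconv : Convex ℝ C)
    (hCpos : 0 < volume C)
    (P : EuclideanSpace ℝ (Fin 2))
    (H : EuclideanSpace ℝ (Fin 2) → ℝ → Set (EuclideanSpace ℝ (Fin 2)))
    (hH : ∀ Q θ, H Q θ =
      {x | 0 ≤ ⟪x - Q, (!₂[-Real.sin θ, Real.cos θ] : EuclideanSpace ℝ (Fin 2))⟫})
    (A : ℝ → ℝ≥0∞) (hA : ∀ θ, A θ = volume (C ∩ H P θ))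
    (α β : ℝ) (hαβ : α < β) (hπ : β - α < Real.pi)
    (hα : A α = 0) (hβ : A β = volume C)
    (n : ℕ) :
    ∃! θ : Fin (n - 1) → ℝ, StrictMono θ ∧ (∀ k, θ k ∈ Set.Ioo α β) ∧
      ∀ k : Fin (n - 1), A (θ k) = (((k : ℕ) + 1 : ℝ≥0∞) / (n : ℝ≥0∞)) * volume C := by
  obtain rfl : H = halfPlane := funext₂ hH
  obtain rfl : A = fun θ => volume (C ∩ halfPlane P θ) := funext hA
  beta_reduce at hα hβ
  have hCfin : volume C ≠ ∞ := hCcompact.measure_lt_top.ne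
  have hN : volume (C \ halfPlane P β) = 0 := by
    simpa [hβ, hCfin] using
      measure_inter_add_sdiff (μ := volume) C (isClosed_halfPlane P β).measurableSet
  refine existsUnique_strictMono_comp_eq hαβ.le
    (continuous_measure_inter_halfPlane hCcompact.measurableSet hCfin).continuousOn
    (fun θ₁ h₁ θ₂ h₂ h₁₂ => measure_inter_halfPlane_mono hN h₁₂ h₂.2 (by linarith [h₁.1]))
    (fun θ₁ h₁ θ₂ h₂ h₁₂ => measure_inter_halfPlane_lt hCcompact hCconv hN h₁₂ h₂.1.2
      (by linarith [h₁.1.1]) (hα ▸ h₁.2.1).ne' (hβ ▸ h₂.2.2).ne)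
    (ENNReal.strictMono_natCast_succ_div_mul hCpos.ne' hCfin n) fun k => ?_
  rw [hα, hβ]
  exact ENNReal.natCast_succ_div_mul_mem_Ioo hCpos.ne' hCfin k

/-- If the line through `P` sweeps across the compact convex region `C` exactly once
as the angle goes from `α` to `β` (with `β - α < π`), then for every `n ≥ 2` there is a
unique strictly increasing tuple of `n - 1` angles in `(α, β)` at which the swept areas
are `k/n · area C` for `k = 1, …, n-1`: an exterior point admits exactly one
equipartitioning fan of `n - 1` rays. -/
theorem existsUnique_equipartitioning_fan_of_sweep
    (C : Set (EuclideanSpace ℝ (Fin 2))) (hCcompact : IsCompact C) (hCconv : Convex ℝ C)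
    (hCpos : 0 < volume C)
    (P : EuclideanSpace ℝ (Fin 2))
    (H : EuclideanSpace ℝ (Fin 2) → ℝ → Set (EuclideanSpace ℝ (Fin 2)))
    (hH : ∀ Q θ, H Q θ =
      {x | 0 ≤ ⟪x - Q, (!₂[-Real.sin θ, Real.cos θ] : EuclideanSpace ℝ (Fin 2))⟫})
    (A : ℝ → ℝ≥0∞) (hA : ∀ θ, A θ = volume (C ∩ H P θ))
    (α β : ℝ) (hαβ : α < β) (hπ : β - α < Real.pi)
    (hα : A α = 0) (hβ : A β = volume C)
    (n : ℕ) (hn : 2 ≤ n) :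
    ∃! θ : Fin (n - 1) → ℝ, StrictMono θ ∧ (∀ k, θ k ∈ Set.Ioo α β) ∧
      ∀ k : Fin (n - 1), A (θ k) = (((k : ℕ) + 1 : ℝ≥0∞) / (n : ℝ≥0∞)) * volume C :=
  existsUnique_equipartitioning_fan_of_sweep_general C hCcompact hCconv hCpos P H hH A hA α β hαβ hπ
    hα hβ n
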